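/- Equivalence of recursive formulations: let T̂ be the operator defined exactly like T except that the promise-keeping constraint (ii) is imposed with equality, i.e., Σ_{s ∈ S} λ_s·[(1−δ)·u(a_s, p_s) + δ·w_s] = w, and let V̂* denote the unique bounded fixed point of T̂. Then for every p₀ ∈ [0,1], V*(p₀, m(p₀)) = sup over w ∈ [m(p₀), M(p₀)] of V̂*(p₀, w). -/

import Mathlib

noncomputable section

/-- Expected payoff of action `a` at belief `p` (= probability of state `ω₁`, encoded `true`). -/
def euP {A : Type*} (u : A → Bool → ℝ) (a : A) (p : ℝ) : ℝ :=
  (1 - p) * u a false + p * u a true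

/-- The agent's best static payoff `m(p)` at belief `p`. -/
def mFun {A : Type*} [Fintype A] [Nonempty A] (u : A → Bool → ℝ) (p : ℝ) : ℝ :=
  Finset.univ.sup' Finset.univ_nonempty (fun a => euP u a p)

/-- The agent's full-information payoff `M(p)` at belief `p`. -/
def MFun {A : Type*} [Fintype A] [Nonempty A] (u : A → Bool → ℝ) (p : ℝ) : ℝ :=
  (1 - p) * Finset.univ.sup' Finset.univ_nonempty (fun a => u a false)
    + p * Finset.univ.sup' Finset.univ_nonempty (fun a => u a true)

/-- The set `W` of pairs (belief, promised utility). -/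
def Wset {A : Type*} [Fintype A] [Nonempty A] (u : A → Bool → ℝ) : Set (ℝ × ℝ) :=
  {pw | pw.1 ∈ Set.Icc (0 : ℝ) 1 ∧ mFun u pw.1 ≤ pw.2 ∧ pw.2 ≤ MFun u pw.1}

/-- A family: for each signal a probability, a posterior belief, a promised continuation
utility, and a recommended action. -/
structure Fam (A S : Type*) where
  prob : S → ℝ
  belief : S → ℝ
  promise : S → ℝ
  act : S → A

/-- Feasibility of the family `f` at the point `pw = (p, w) ∈ W`. -/
def Feasible {A S : Type*} [Fintype A] [Nonempty A] [Fintype S]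
    (u : A → Bool → ℝ) (δ : ℝ) (pw : ℝ × ℝ) (f : Fam A S) : Prop :=
  (∀ s, f.prob s ∈ Set.Icc (0 : ℝ) 1) ∧
  (∀ s, (f.belief s, f.promise s) ∈ Wset u) ∧
  (∀ s, (1 - δ) * euP u (f.act s) (f.belief s) + δ * f.promise s ≥ mFun u (f.belief s)) ∧
  (∑ s, f.prob s * ((1 - δ) * euP u (f.act s) (f.belief s) + δ * f.promise s) ≥ pw.2) ∧
  (∑ s, f.prob s * f.belief s = pw.1) ∧
  (∑ s, f.prob s = 1)

/-- The principal's payoff from the family `f`, given continuation value function `V`. -/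
def famPayoff {A S : Type*} [Fintype S] (v : A → Bool → ℝ) (δ : ℝ) (V : ℝ × ℝ → ℝ)
    (f : Fam A S) : ℝ :=
  ∑ s, f.prob s * ((1 - δ) * euP v (f.act s) (f.belief s) + δ * V (f.belief s, f.promise s))

/-- The Bellman operator `T`. -/
def bellman {A S : Type*} [Fintype A] [Nonempty A] [Fintype S]
    (u v : A → Bool → ℝ) (δ : ℝ) (V : ℝ × ℝ → ℝ) (pw : ℝ × ℝ) : ℝ :=
  sSup {x | ∃ f : Fam A S, Feasible u δ pw f ∧ x = famPayoff v δ V f}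

/-- `V` is bounded on `W`. -/
def BddOnW {A : Type*} [Fintype A] [Nonempty A] (u : A → Bool → ℝ) (V : ℝ × ℝ → ℝ) : Prop :=
  ∃ C : ℝ, ∀ pw ∈ Wset u, |V pw| ≤ C

/-- Feasibility with the promise-keeping constraint imposed as an equality. -/
def FeasibleEq {A S : Type*} [Fintype A] [Nonempty A] [Fintype S]
    (u : A → Bool → ℝ) (δ : ℝ) (pw : ℝ × ℝ) (f : Fam A S) : Prop :=
  (∀ s, f.prob s ∈ Set.Icc (0 : ℝ) 1) ∧
  (∀ s, (f.belief s, f.promise s) ∈ Wset u) ∧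
  (∀ s, (1 - δ) * euP u (f.act s) (f.belief s) + δ * f.promise s ≥ mFun u (f.belief s)) ∧
  (∑ s, f.prob s * ((1 - δ) * euP u (f.act s) (f.belief s) + δ * f.promise s) = pw.2) ∧
  (∑ s, f.prob s * f.belief s = pw.1) ∧
  (∑ s, f.prob s = 1)

/-- The Bellman operator `T̂` with promise keeping as an equality. -/
def bellmanEq {A S : Type*} [Fintype A] [Nonempty A] [Fintype S]
    (u v : A → Bool → ℝ) (δ : ℝ) (V : ℝ × ℝ → ℝ) (pw : ℝ × ℝ) : ℝ :=
  sSup {x | ∃ f : Fam A S, FeasibleEq u δ pw f ∧ x = famPayoff v δ V f}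

/-!
Let `V̄(p, w)` be the supremum of `V̂*(p, w')` over the promises `w' ∈ [w, M(p)]`. A family
feasible for `T` at `(p, w)` keeps promise exactly at the utility `w' ≥ w` it delivers, and a
family keeping promise exactly at `w' ≥ w` is feasible at `(p, w)`; hence `T V̂* = V̄`. Raising
continuation promises only relaxes the constraints, so `T V̄ = T V̂*`. Thus `V̄` is a bounded
fixed point of `T`, equal to `V*` because `T` is a contraction, and evaluating at `(p₀, m(p₀))`
gives the claim. All suprema are over nonempty sets: two signals suffice to keep any promise in
`W` exactly, either without information or by revealing `ω₁` with a probability found by the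
intermediate value theorem.
-/

section

open Set Filter Topology

variable {A S : Type*}

section Static

variable [Fintype A] [Nonempty A] (u : A → Bool → ℝ)

lemma exists_euP_eq_mFun (p : ℝ) : ∃ a, euP u a p = mFun u p := by
  obtain ⟨a, -, ha⟩ := Finset.exists_mem_eq_sup' Finset.univ_nonempty (fun a => euP u a p)
  exact ⟨a, ha.symm⟩

lemma euP_le_MFun (a : A) {p : ℝ} (hp : p ∈ Icc (0 : ℝ) 1) : euP u a p ≤ MFun u p := by
  have h₀ : u a false ≤ Finset.univ.sup' Finset.univ_nonempty (u · false) :=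
    Finset.le_sup' (u · false) (Finset.mem_univ a)
  have h₁ : u a true ≤ Finset.univ.sup' Finset.univ_nonempty (u · true) :=
    Finset.le_sup' (u · true) (Finset.mem_univ a)
  unfold euP MFun
  gcongr <;> linarith [hp.1, hp.2]

lemma mFun_le_MFun {p : ℝ} (hp : p ∈ Icc (0 : ℝ) 1) : mFun u p ≤ MFun u p :=
  Finset.sup'_le _ _ fun a _ => euP_le_MFun u a hp

lemma mFun_zero : mFun u 0 = MFun u 0 := by
  simp [mFun, MFun, euP]

lemma mFun_one : mFun u 1 = MFun u 1 := by
  simp [mFun, MFun, euP]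

lemma continuous_mFun : Continuous (mFun u) :=
  Continuous.finset_sup'_apply _ fun a _ => by unfold euP; fun_prop

lemma continuous_MFun : Continuous (MFun u) := by
  unfold MFun; fun_prop

lemma exists_euP_le : ∃ E, ∀ a, ∀ q ∈ Icc (0 : ℝ) 1, euP u a q ≤ E := by
  obtain ⟨E, hE⟩ := isCompact_Icc.bddAbove_image (continuous_MFun u).continuousOn
  exact ⟨E, fun a q hq => (euP_le_MFun u a hq).trans (hE (mem_image_of_mem _ hq))⟩

lemma sum_mul_MFun [Fintype S] {f q : S → ℝ} {p : ℝ} (hf : ∑ s, f s = 1)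
    (hfq : ∑ s, f s * q s = p) :
    ∑ s, f s * MFun u (q s) = MFun u p := by
  unfold MFun
  set c₀ := Finset.univ.sup' Finset.univ_nonempty (u · false)
  set c₁ := Finset.univ.sup' Finset.univ_nonempty (u · true)
  have h : ∀ s, f s * ((1 - q s) * c₀ + q s * c₁) = f s * c₀ + f s * q s * (c₁ - c₀) :=
    fun s => by ring
  simp only [h, Finset.sum_add_distrib, ← Finset.sum_mul, hf, hfq]
  ring

lemma mem_Wset_of_le {p w w' : ℝ} (hpw : (p, w) ∈ Wset u) (hw' : w' ∈ Icc w (MFun u p)) :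
    (p, w') ∈ Wset u :=
  ⟨hpw.1, hpw.2.1.trans hw'.1, hw'.2⟩

lemma BddOnW.bddAbove {V : ℝ × ℝ → ℝ} (hV : BddOnW u V) : BddAbove (V '' Wset u) := by
  obtain ⟨C, hC⟩ := hV
  exact ⟨C, by rintro _ ⟨pw, hpw, rfl⟩; exact (le_abs_self _).trans (hC pw hpw)⟩

end Static

section Dynamic

variable [Fintype S] {δ : ℝ}

-- The left-hand side of the promise-keeping constraint (ii).
def agentValue (u : A → Bool → ℝ) (δ : ℝ) (f : Fam A S) : ℝ :=
  ∑ s, f.prob s * ((1 - δ) * euP u (f.act s) (f.belief s) + δ * f.promise s)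

lemma famPayoff_le_famPayoff_add (v : A → Bool → ℝ) (hδ : 0 ≤ δ) {V₁ V₂ : ℝ × ℝ → ℝ} {c : ℝ}
    {f : Fam A S} (hprob : ∀ s, 0 ≤ f.prob s) (hsum : ∑ s, f.prob s = 1) (g : S → ℝ)
    (h : ∀ s, V₁ (f.belief s, f.promise s) ≤ V₂ (f.belief s, g s) + c) :
    famPayoff v δ V₁ f ≤ famPayoff v δ V₂ { f with promise := g } + δ * c := by
  calc famPayoff v δ V₁ f
      ≤ ∑ s, (f.prob s * ((1 - δ) * euP v (f.act s) (f.belief s) + δ * V₂ (f.belief s, g s))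
          + f.prob s * (δ * c)) := by
        refine Finset.sum_le_sum fun s _ => ?_
        rw [← mul_add]
        refine mul_le_mul_of_nonneg_left ?_ (hprob s)
        nlinarith [mul_le_mul_of_nonneg_left (h s) hδ]
    _ = famPayoff v δ V₂ { f with promise := g } + δ * c := by
        rw [Finset.sum_add_distrib, ← Finset.sum_mul, hsum, one_mul]
        rfl

def pairFam [DecidableEq S] (s₁ s₀ : S) (l b₁ b₀ w₁ w₀ : ℝ) (a₁ a₀ : A) : Fam A S where
  prob s := if s = s₁ then l else if s = s₀ then 1 - l else 0
  belief s := if s = s₁ then b₁ else b₀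
  promise s := if s = s₁ then w₁ else w₀
  act s := if s = s₁ then a₁ else a₀

lemma sum_pairFam_prob_mul [DecidableEq S] {s₁ s₀ : S} (hne : s₁ ≠ s₀) (l b₁ b₀ w₁ w₀ : ℝ)
    (a₁ a₀ : A) (h : S → ℝ) :
    ∑ s, (pairFam s₁ s₀ l b₁ b₀ w₁ w₀ a₁ a₀).prob s * h s = l * h s₁ + (1 - l) * h s₀ := by
  rw [Fintype.sum_eq_add s₁ s₀ hne fun s hs => by simp [pairFam, hs.1, hs.2]]
  simp [pairFam, hne.symm]

variable [Fintype A] [Nonempty A] {u : A → Bool → ℝ}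

lemma FeasibleEq.feasible_of_le {p w w' : ℝ} {f : Fam A S} (hf : FeasibleEq u δ (p, w') f)
    (hw : w ≤ w') : Feasible u δ (p, w) f := by
  obtain ⟨hprob, hW, hic, hpk, hbel, hsum⟩ := hf
  exact ⟨hprob, hW, hic, hw.trans hpk.ge, hbel, hsum⟩

lemma Feasible.feasibleEq_agentValue {pw : ℝ × ℝ} {f : Fam A S} (hf : Feasible u δ pw f) :
    FeasibleEq u δ (pw.1, agentValue u δ f) f := by
  obtain ⟨hprob, hW, hic, -, hbel, hsum⟩ := hf
  exact ⟨hprob, hW, hic, rfl, hbel, hsum⟩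

lemma Feasible.agentValue_le_MFun (hδ : δ ∈ Icc (0 : ℝ) 1) {p w : ℝ} {f : Fam A S}
    (hf : Feasible u δ (p, w) f) : agentValue u δ f ≤ MFun u p := by
  obtain ⟨hprob, hW, -, -, hbel, hsum⟩ := hf
  calc agentValue u δ f ≤ ∑ s, f.prob s * MFun u (f.belief s) := by
        refine Finset.sum_le_sum fun s _ => mul_le_mul_of_nonneg_left ?_ (hprob s).1
        have he := euP_le_MFun u (f.act s) (hW s).1
        have hw := (hW s).2.2
        have h1 : 0 ≤ 1 - δ := by linarith [hδ.2]
        nlinarith [hδ.1]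
    _ = MFun u p := sum_mul_MFun u hsum hbel

lemma Feasible.withPromise (hδ : 0 ≤ δ) {pw : ℝ × ℝ} {f : Fam A S} (hf : Feasible u δ pw f)
    {g : S → ℝ} (hg : ∀ s, g s ∈ Icc (f.promise s) (MFun u (f.belief s))) :
    Feasible u δ pw { f with promise := g } := by
  obtain ⟨hprob, hW, hic, hpk, hbel, hsum⟩ := hf
  have hδg : ∀ s, δ * f.promise s ≤ δ * g s := fun s => mul_le_mul_of_nonneg_left (hg s).1 hδ
  refine ⟨hprob, fun s => mem_Wset_of_le u (hW s) (hg s), fun s => ?_, ?_, hbel, hsum⟩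
  · exact (hic s).trans (by dsimp only; linarith [hδg s])
  · refine hpk.trans (Finset.sum_le_sum fun s _ => mul_le_mul_of_nonneg_left ?_ (hprob s).1)
    dsimp only
    linarith [hδg s]

lemma feasibleEq_pairFam [DecidableEq S] {s₁ s₀ : S} (hne : s₁ ≠ s₀) {l b₁ b₀ w₁ w₀ p w : ℝ}
    {a₁ a₀ : A} (hl : l ∈ Icc (0 : ℝ) 1) (h₁ : (b₁, w₁) ∈ Wset u) (h₀ : (b₀, w₀) ∈ Wset u)
    (ic₁ : mFun u b₁ ≤ (1 - δ) * euP u a₁ b₁ + δ * w₁)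
    (ic₀ : mFun u b₀ ≤ (1 - δ) * euP u a₀ b₀ + δ * w₀)
    (hp : l * b₁ + (1 - l) * b₀ = p)
    (hw : l * ((1 - δ) * euP u a₁ b₁ + δ * w₁) + (1 - l) * ((1 - δ) * euP u a₀ b₀ + δ * w₀) = w) :
    FeasibleEq u δ (p, w) (pairFam s₁ s₀ l b₁ b₀ w₁ w₀ a₁ a₀) := by
  refine ⟨fun s => ?_, fun s => ?_, fun s => ?_, ?_, ?_, ?_⟩
  · simp only [pairFam]
    split_ifs <;> constructor <;> linarith [hl.1, hl.2]
  · simp only [pairFam]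
    split_ifs <;> assumption
  · simp only [pairFam]
    split_ifs <;> assumption
  · rw [sum_pairFam_prob_mul hne]
    simpa [pairFam, hne.symm] using hw
  · rw [sum_pairFam_prob_mul hne]
    simpa [pairFam, hne.symm] using hp
  · simpa using sum_pairFam_prob_mul hne l b₁ b₀ w₁ w₀ a₁ a₀ fun _ => 1

lemma exists_split_of_lt {p w : ℝ} (hp : p ∈ Icc (0 : ℝ) 1)
    (hlow : (1 - δ) * mFun u p + δ * MFun u p < w) (hwM : w ≤ MFun u p) :
    ∃ l ∈ Icc (0 : ℝ) 1, ∃ q ∈ Icc (0 : ℝ) 1, l + (1 - l) * q = p ∧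
      l * MFun u 1 + (1 - l) * ((1 - δ) * mFun u q + δ * MFun u q) = w := by
  have hp1 : p < 1 := by
    refine lt_of_le_of_ne hp.2 fun h => ?_
    subst h
    rw [mFun_one] at hlow
    linarith
  let q : ℝ → ℝ := fun l => (p - l) / (1 - l)
  let g : ℝ → ℝ := fun l => l * MFun u 1 + (1 - l) * ((1 - δ) * mFun u (q l) + δ * MFun u (q l))
  have hq : ContinuousOn q (Icc 0 p) :=
    (continuousOn_const.sub continuousOn_id).div (continuousOn_const.sub continuousOn_id)
      fun l hl => (sub_pos.2 (hl.2.trans_lt hp1)).ne'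
  have hg : ContinuousOn g (Icc 0 p) := by
    have hm := (continuous_mFun u).comp_continuousOn hq
    have hM := (continuous_MFun u).comp_continuousOn hq
    exact (continuousOn_id.mul continuousOn_const).add ((continuousOn_const.sub continuousOn_id).mul
      ((continuousOn_const.mul hm).add (continuousOn_const.mul hM)))
  have hg₀ : g 0 = (1 - δ) * mFun u p + δ * MFun u p := by simp [g, q]
  -- at `l = p` all mass sits on the beliefs `1` and `0`, where `mFun` and `MFun` agree
  have hgp : g p = MFun u p := by
    simp only [g, q, sub_self, zero_div, mFun_zero]
    unfold MFun
    ring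
  obtain ⟨l, hl, hgl⟩ := intermediate_value_Icc hp.1 hg ⟨hg₀ ▸ hlow.le, hgp ▸ hwM⟩
  have h1l : 0 < 1 - l := by linarith [hl.2]
  refine ⟨l, ⟨hl.1, by linarith [hl.2]⟩, q l,
    ⟨div_nonneg (by linarith [hl.2]) h1l.le, (div_le_one h1l).2 (by linarith [hp.2])⟩, ?_, hgl⟩
  simp only [q]
  field_simp
  ring

theorem exists_feasibleEq (hδ : δ ∈ Ioc (0 : ℝ) 1) (hS : 2 ≤ Fintype.card S) {p w : ℝ}
    (hpw : (p, w) ∈ Wset u) : ∃ f : Fam A S, FeasibleEq u δ (p, w) f := by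
  classical
  obtain ⟨s₁, s₀, hne⟩ := Fintype.exists_pair_of_one_lt_card (α := S) (by omega)
  obtain ⟨hp, hmw, hwM⟩ : p ∈ Icc (0 : ℝ) 1 ∧ mFun u p ≤ w ∧ w ≤ MFun u p := hpw
  have hδ0 := hδ.1
  by_cases hlow : w ≤ (1 - δ) * mFun u p + δ * MFun u p
  · -- reveal nothing and promise `w'`
    obtain ⟨a, ha⟩ := exists_euP_eq_mFun u p
    set w' := (w - (1 - δ) * mFun u p) / δ with hw'def
    have hw' : (1 - δ) * euP u a p + δ * w' = w := by
      rw [ha, hw'def]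
      field_simp
      ring
    have hpw' : (p, w') ∈ Wset u := by
      refine ⟨hp, ?_, ?_⟩
      · rw [le_div_iff₀ hδ0]; nlinarith
      · rw [div_le_iff₀ hδ0]; linarith
    exact ⟨_, feasibleEq_pairFam hne (l := 1) ⟨zero_le_one, le_rfl⟩ hpw' hpw'
      (hw' ▸ hmw) (hw' ▸ hmw) (by ring) (by rw [hw']; ring)⟩
  · -- reveal state `ω₁` with probability `l` and otherwise move the belief to `q`
    obtain ⟨l, hl, q, hq, hpq, hlq⟩ := exists_split_of_lt hp (not_le.1 hlow) hwM
    obtain ⟨a₁, ha₁⟩ := exists_euP_eq_mFun u 1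
    obtain ⟨a₀, ha₀⟩ := exists_euP_eq_mFun u q
    have hmM := mFun_le_MFun u hq
    have h1 : ((1 : ℝ), MFun u 1) ∈ Wset u :=
      ⟨⟨zero_le_one, le_rfl⟩, (mFun_one u).le, le_rfl⟩
    refine ⟨_, feasibleEq_pairFam (b₀ := q) (w₀ := MFun u q) (a₁ := a₁) (a₀ := a₀) hne hl h1
      ⟨hq, hmM, le_rfl⟩ ?_ ?_ (by linarith) ?_⟩
    · rw [ha₁, mFun_one]; linarith
    · rw [ha₀]; nlinarith [hδ.2]
    · rw [ha₁, ha₀, mFun_one, ← hlq]; ring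

lemma exists_famPayoff_le (v : A → Bool → ℝ) (hδ : δ ∈ Icc (0 : ℝ) 1) {V : ℝ × ℝ → ℝ}
    (hV : BddAbove (V '' Wset u)) :
    ∃ B, ∀ (pw : ℝ × ℝ) (f : Fam A S), Feasible u δ pw f → famPayoff v δ V f ≤ B := by
  obtain ⟨C, hC⟩ := hV
  obtain ⟨E, hE⟩ := exists_euP_le v
  refine ⟨(1 - δ) * E + δ * C, fun pw f hf => ?_⟩
  obtain ⟨hprob, hW, -, -, -, hsum⟩ := hf
  calc famPayoff v δ V f ≤ ∑ s, f.prob s * ((1 - δ) * E + δ * C) := by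
        refine Finset.sum_le_sum fun s _ => mul_le_mul_of_nonneg_left ?_ (hprob s).1
        exact add_le_add (mul_le_mul_of_nonneg_left (hE _ _ (hW s).1) (by linarith [hδ.2]))
          (mul_le_mul_of_nonneg_left (hC (mem_image_of_mem V (hW s))) hδ.1)
    _ = (1 - δ) * E + δ * C := by rw [← Finset.sum_mul, hsum, one_mul]

lemma le_bellman (v : A → Bool → ℝ) (hδ : δ ∈ Icc (0 : ℝ) 1) {V : ℝ × ℝ → ℝ}
    (hV : BddAbove (V '' Wset u)) {pw : ℝ × ℝ} {f : Fam A S} (hf : Feasible u δ pw f) :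
    famPayoff v δ V f ≤ bellman (S := S) u v δ V pw := by
  obtain ⟨B, hB⟩ := exists_famPayoff_le v hδ hV (S := S)
  exact le_csSup ⟨B, by rintro _ ⟨f, hf, rfl⟩; exact hB pw f hf⟩ ⟨f, hf, rfl⟩

lemma le_bellmanEq (v : A → Bool → ℝ) (hδ : δ ∈ Icc (0 : ℝ) 1) {V : ℝ × ℝ → ℝ}
    (hV : BddAbove (V '' Wset u)) {p w : ℝ} {f : Fam A S} (hf : FeasibleEq u δ (p, w) f) :
    famPayoff v δ V f ≤ bellmanEq (S := S) u v δ V (p, w) := by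
  obtain ⟨B, hB⟩ := exists_famPayoff_le v hδ hV (S := S)
  exact le_csSup ⟨B, by rintro _ ⟨f, hf, rfl⟩; exact hB _ f (hf.feasible_of_le le_rfl)⟩
    ⟨f, hf, rfl⟩

lemma bellman_le (v : A → Bool → ℝ) (hδ : δ ∈ Ioc (0 : ℝ) 1) (hS : 2 ≤ Fintype.card S)
    {V : ℝ × ℝ → ℝ} {p w c : ℝ} (hpw : (p, w) ∈ Wset u)
    (h : ∀ f : Fam A S, Feasible u δ (p, w) f → famPayoff v δ V f ≤ c) :
    bellman (S := S) u v δ V (p, w) ≤ c := by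
  obtain ⟨f, hf⟩ := exists_feasibleEq hδ hS hpw
  exact csSup_le ⟨_, f, hf.feasible_of_le le_rfl, rfl⟩ (by rintro _ ⟨f, hf, rfl⟩; exact h f hf)

lemma bellmanEq_le_bellman (v : A → Bool → ℝ) (hδ : δ ∈ Ioc (0 : ℝ) 1)
    (hS : 2 ≤ Fintype.card S) {V : ℝ × ℝ → ℝ} (hV : BddAbove (V '' Wset u)) {p w w' : ℝ}
    (hpw' : (p, w') ∈ Wset u) (hw : w ≤ w') :
    bellmanEq (S := S) u v δ V (p, w') ≤ bellman (S := S) u v δ V (p, w) := by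
  obtain ⟨f, hf⟩ := exists_feasibleEq hδ hS hpw'
  exact csSup_le ⟨_, f, hf, rfl⟩ (by
    rintro _ ⟨f, hf, rfl⟩
    exact le_bellman v (Ioc_subset_Icc_self hδ) hV (hf.feasible_of_le hw))

lemma bellman_le_bellman_add (v : A → Bool → ℝ) (hδ : δ ∈ Ioc (0 : ℝ) 1)
    (hS : 2 ≤ Fintype.card S) {V₁ V₂ : ℝ × ℝ → ℝ} {c : ℝ} (hV₂ : BddAbove (V₂ '' Wset u))
    (h : ∀ pw ∈ Wset u, V₁ pw ≤ V₂ pw + c) {p w : ℝ} (hpw : (p, w) ∈ Wset u) :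
    bellman (S := S) u v δ V₁ (p, w) ≤ bellman (S := S) u v δ V₂ (p, w) + δ * c := by
  refine bellman_le v hδ hS hpw fun f hf => ?_
  have hle := le_bellman v (Ioc_subset_Icc_self hδ) hV₂ hf
  obtain ⟨hprob, hW, -, -, -, hsum⟩ := hf
  exact (famPayoff_le_famPayoff_add v hδ.1.le (fun s => (hprob s).1) hsum f.promise
    fun s => h _ (hW s)).trans (add_le_add_left hle _)

theorem eqOn_of_bellman_eq_self (v : A → Bool → ℝ) (hδ : δ ∈ Ioo (0 : ℝ) 1)
    (hS : 2 ≤ Fintype.card S) {V₁ V₂ : ℝ × ℝ → ℝ} (hV₁ : BddOnW u V₁) (hV₂ : BddOnW u V₂)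
    (h₁ : ∀ pw ∈ Wset u, bellman (S := S) u v δ V₁ pw = V₁ pw)
    (h₂ : ∀ pw ∈ Wset u, bellman (S := S) u v δ V₂ pw = V₂ pw) :
    EqOn V₁ V₂ (Wset u) := by
  have contract : ∀ K, (∀ pw ∈ Wset u, |V₁ pw - V₂ pw| ≤ K) →
      ∀ pw ∈ Wset u, |V₁ pw - V₂ pw| ≤ δ * K := by
    rintro K hK ⟨p, w⟩ hpw
    have h₁₂ := bellman_le_bellman_add (V₁ := V₁) (c := K) v (Ioo_subset_Ioc_self hδ) hS
      hV₂.bddAbove (fun pw hpw => by linarith [(abs_sub_le_iff.1 (hK pw hpw)).1]) hpw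
    have h₂₁ := bellman_le_bellman_add (V₁ := V₂) (c := K) v (Ioo_subset_Ioc_self hδ) hS
      hV₁.bddAbove (fun pw hpw => by linarith [(abs_sub_le_iff.1 (hK pw hpw)).2]) hpw
    rw [h₁ _ hpw, h₂ _ hpw] at h₁₂ h₂₁
    exact abs_sub_le_iff.2 ⟨by linarith, by linarith⟩
  obtain ⟨C₁, hC₁⟩ := hV₁
  obtain ⟨C₂, hC₂⟩ := hV₂
  have iterate : ∀ n : ℕ, ∀ pw ∈ Wset u, |V₁ pw - V₂ pw| ≤ δ ^ n * (C₁ + C₂) := by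
    intro n
    induction n with
    | zero =>
      intro pw hpw
      simpa using (abs_sub _ _).trans (add_le_add (hC₁ pw hpw) (hC₂ pw hpw))
    | succ n ih =>
      rw [pow_succ', mul_assoc]
      exact contract _ ih
  intro pw hpw
  have hlim : Tendsto (fun n : ℕ => δ ^ n * (C₁ + C₂)) atTop (𝓝 0) := by
    simpa using (tendsto_pow_atTop_nhds_zero_of_lt_one hδ.1.le hδ.2).mul_const (C₁ + C₂)
  exact sub_eq_zero.1 (abs_nonpos_iff.1 (ge_of_tendsto' hlim fun n => iterate n pw hpw))

end Dynamic

section PromiseSup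

variable [Fintype A] [Nonempty A] {u : A → Bool → ℝ} {V : ℝ × ℝ → ℝ} {p w : ℝ}

def promiseSup (u : A → Bool → ℝ) (V : ℝ × ℝ → ℝ) (pw : ℝ × ℝ) : ℝ :=
  sSup ((fun w' => V (pw.1, w')) '' Icc pw.2 (MFun u pw.1))

lemma le_promiseSup (hV : BddAbove (V '' Wset u)) (hpw : (p, w) ∈ Wset u) {w' : ℝ}
    (hw' : w' ∈ Icc w (MFun u p)) : V (p, w') ≤ promiseSup u V (p, w) := by
  refine le_csSup (hV.mono ?_) ⟨w', hw', rfl⟩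
  rintro _ ⟨w'', hw'', rfl⟩
  exact mem_image_of_mem V (mem_Wset_of_le u hpw hw'')

lemma promiseSup_le {c : ℝ} (hwM : w ≤ MFun u p) (h : ∀ w' ∈ Icc w (MFun u p), V (p, w') ≤ c) :
    promiseSup u V (p, w) ≤ c :=
  csSup_le ⟨_, w, ⟨le_rfl, hwM⟩, rfl⟩ (by rintro _ ⟨w', hw', rfl⟩; exact h w' hw')

lemma exists_promiseSup_le_add (hwM : w ≤ MFun u p) {ε : ℝ} (hε : 0 < ε) :
    ∃ w' ∈ Icc w (MFun u p), promiseSup u V (p, w) ≤ V (p, w') + ε := by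
  obtain ⟨_, ⟨w', hw', rfl⟩, hlt⟩ :=
    exists_lt_of_lt_csSup (s := (fun w' => V (p, w')) '' Icc w (MFun u p))
      ⟨_, w, ⟨le_rfl, hwM⟩, rfl⟩ (sub_lt_self (promiseSup u V (p, w)) hε)
  exact ⟨w', hw', by linarith⟩

lemma BddOnW.promiseSup (hV : BddOnW u V) : BddOnW u (promiseSup u V) := by
  obtain ⟨C, hC⟩ := id hV
  refine ⟨C, fun ⟨p, w⟩ hpw => abs_le.2 ⟨?_, ?_⟩⟩
  · exact (abs_le.1 (hC _ hpw)).1.trans (le_promiseSup hV.bddAbove hpw ⟨le_rfl, hpw.2.2⟩)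
  · exact promiseSup_le hpw.2.2 fun w' hw' =>
      (le_abs_self _).trans (hC _ (mem_Wset_of_le u hpw hw'))

variable [Fintype S] {δ : ℝ}

-- Replacing each continuation promise by a near-maximiser of `V` above it keeps the family
-- feasible, because raising promises only relaxes the constraints.
lemma bellman_promiseSup (v : A → Bool → ℝ) (hδ : δ ∈ Ioc (0 : ℝ) 1) (hS : 2 ≤ Fintype.card S)
    (hV : BddOnW u V) (hpw : (p, w) ∈ Wset u) :
    bellman (S := S) u v δ (promiseSup u V) (p, w) = bellman (S := S) u v δ V (p, w) := by
  refine le_antisymm (le_of_forall_pos_le_add fun ε hε => ?_) ?_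
  · refine bellman_le v hδ hS hpw fun f hf => ?_
    choose g hg hgε using fun s =>
      exists_promiseSup_le_add (V := V) ((hf.2.1 s).2.2) hε
    have hle := le_bellman v (Ioc_subset_Icc_self hδ) hV.bddAbove (hf.withPromise hδ.1.le hg)
    obtain ⟨hprob, -, -, -, -, hsum⟩ := hf
    calc famPayoff v δ (promiseSup u V) f
        ≤ famPayoff v δ V { f with promise := g } + δ * ε :=
          famPayoff_le_famPayoff_add v hδ.1.le (fun s => (hprob s).1) hsum g hgε
      _ ≤ bellman (S := S) u v δ V (p, w) + ε :=
          add_le_add hle (mul_le_of_le_one_left hε.le hδ.2)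
  · simpa using bellman_le_bellman_add v hδ hS hV.promiseSup.bddAbove (c := 0)
      (fun qw hqw => by simpa using le_promiseSup hV.bddAbove hqw ⟨le_rfl, hqw.2.2⟩) hpw

lemma bellman_eq_promiseSup (v : A → Bool → ℝ) (hδ : δ ∈ Ioc (0 : ℝ) 1)
    (hS : 2 ≤ Fintype.card S) (hV : BddAbove (V '' Wset u))
    (hfix : ∀ pw ∈ Wset u, bellmanEq (S := S) u v δ V pw = V pw) (hpw : (p, w) ∈ Wset u) :
    bellman (S := S) u v δ V (p, w) = promiseSup u V (p, w) := by
  have hδ' := Ioc_subset_Icc_self hδ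
  refine le_antisymm (bellman_le v hδ hS hpw fun f hf => ?_)
    (promiseSup_le hpw.2.2 fun w' hw' => ?_)
  · have hw : agentValue u δ f ∈ Icc w (MFun u p) := ⟨hf.2.2.2.1, hf.agentValue_le_MFun hδ'⟩
    calc famPayoff v δ V f ≤ bellmanEq (S := S) u v δ V (p, agentValue u δ f) :=
          le_bellmanEq v hδ' hV hf.feasibleEq_agentValue
      _ = V (p, agentValue u δ f) := hfix _ (mem_Wset_of_le u hpw hw)
      _ ≤ promiseSup u V (p, w) := le_promiseSup hV hpw hw
  · have hpw' := mem_Wset_of_le u hpw hw'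
    rw [← hfix _ hpw']
    exact bellmanEq_le_bellman v hδ hS hV hpw' hw'.1

theorem bellman_promiseSup_eq_self (v : A → Bool → ℝ) (hδ : δ ∈ Ioc (0 : ℝ) 1)
    (hS : 2 ≤ Fintype.card S) (hV : BddOnW u V)
    (hfix : ∀ pw ∈ Wset u, bellmanEq (S := S) u v δ V pw = V pw) :
    ∀ pw ∈ Wset u, bellman (S := S) u v δ (promiseSup u V) pw = promiseSup u V pw := by
  rintro ⟨p, w⟩ hpw
  rw [bellman_promiseSup v hδ hS hV hpw, bellman_eq_promiseSup v hδ hS hV.bddAbove hfix hpw]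

end PromiseSup

end

theorem recursive_formulations_equivalent_general
    {A S : Type*} [Fintype A] [Nonempty A] [Fintype S]
    (u v : A → Bool → ℝ) (δ : ℝ)
    (hδ : δ ∈ Set.Ioo (0 : ℝ) 1)
    (hS2 : 2 ≤ Fintype.card S)
    (Vstar : ℝ × ℝ → ℝ) (hVb : BddOnW u Vstar)
    (hVfix : ∀ pw ∈ Wset u, bellman (S := S) u v δ Vstar pw = Vstar pw)
    (Vhat : ℝ × ℝ → ℝ) (hVhb : BddOnW u Vhat)
    (hVhfix : ∀ pw ∈ Wset u, bellmanEq (S := S) u v δ Vhat pw = Vhat pw) :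
    ∀ p₀ : ℝ, p₀ ∈ Set.Icc (0 : ℝ) 1 →
      Vstar (p₀, mFun u p₀)
        = sSup ((fun w => Vhat (p₀, w)) '' Set.Icc (mFun u p₀) (MFun u p₀)) := by
  intro p₀ hp₀
  have hW : (p₀, mFun u p₀) ∈ Wset u := ⟨hp₀, le_rfl, mFun_le_MFun u hp₀⟩
  exact eqOn_of_bellman_eq_self v hδ hS2 hVb hVhb.promiseSup hVfix
    (bellman_promiseSup_eq_self v (Set.Ioo_subset_Ioc_self hδ) hS2 hVhb hVhfix) hW

/-- equivalence of the two recursive formulations: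
`V*(p₀, m(p₀)) = sup_{w ∈ [m(p₀), M(p₀)]} V̂*(p₀, w)`. -/
theorem recursive_formulations_equivalent
    {A S : Type*} [Fintype A] [Nonempty A] [Fintype S]
    (u v : A → Bool → ℝ) (δ : ℝ) (astar : A)
    (hδ : δ ∈ Set.Ioo (0 : ℝ) 1)
    (hS2 : 2 ≤ Fintype.card S) (hAS : Fintype.card A ≤ Fintype.card S)
    (hv0 : 0 < v astar false) (hv1 : 0 < v astar true)
    (hvz : ∀ a : A, a ≠ astar → v a false = 0 ∧ v a true = 0)
    (Vstar : ℝ × ℝ → ℝ) (hVb : BddOnW u Vstar)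
    (hVfix : ∀ pw ∈ Wset u, bellman (S := S) u v δ Vstar pw = Vstar pw)
    (Vhat : ℝ × ℝ → ℝ) (hVhb : BddOnW u Vhat)
    (hVhfix : ∀ pw ∈ Wset u, bellmanEq (S := S) u v δ Vhat pw = Vhat pw) :
    ∀ p₀ : ℝ, p₀ ∈ Set.Icc (0 : ℝ) 1 →
      Vstar (p₀, mFun u p₀)
        = sSup ((fun w => Vhat (p₀, w)) '' Set.Icc (mFun u p₀) (MFun u p₀)) :=
  recursive_formulations_equivalent_general u v δ hδ hS2 Vstar hVb hVfix Vhat hVhb hVhfix
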